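/- arXiv:1608.04027 — 5 statements merged into one kernel-verified Lean document; each statement's English description precedes it below -/
import Mathlib

section
/- Let K be a field of characteristic zero and d a simple K-derivation of R = K[X,Y₁,...,Yₙ] of Shamsuddin type: d(X)=1 and d(Yᵢ)=aᵢYᵢ+bᵢ with aᵢ,bᵢ ∈ K[X]. If ρ is a K-algebra automorphism of R commuting with d (ρd = dρ), then ρ(X) = X + α for some α ∈ K. -/
open MvPolynomial

/-- For a simple Shamsuddin derivation of `K[X,Y₁,…,Yₙ]`, any automorphism in the
isotropy group sends `X` to `X + α` with `α ∈ K`. -/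
theorem stmt3 (K : Type*) [Field K] [CharZero K] (n : ℕ)
    (d : Derivation K (MvPolynomial (Fin (n + 1)) K) (MvPolynomial (Fin (n + 1)) K))
    (a b : Fin n → Polynomial K)
    (hdX : d (X 0) = 1)
    (hdY : ∀ i : Fin n, d (X i.succ) =
      Polynomial.aeval (X 0 : MvPolynomial (Fin (n + 1)) K) (a i) * X i.succ +
        Polynomial.aeval (X 0 : MvPolynomial (Fin (n + 1)) K) (b i))
    (hsimple : ∀ I : Ideal (MvPolynomial (Fin (n + 1)) K),
      (∀ x ∈ I, d x ∈ I) → I = ⊥ ∨ I = ⊤)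
    (ρ : MvPolynomial (Fin (n + 1)) K ≃ₐ[K] MvPolynomial (Fin (n + 1)) K)
    (hρ : ∀ r, ρ (d r) = d (ρ r)) :
    ∃ α : K, ρ (X 0) = X 0 + C α := by
  set f : MvPolynomial (Fin (n + 1)) K := ρ (X 0) - X 0 with hf
  have hdf : d f = 0 := by
    have h1 : d (ρ (X 0)) = 1 := by
      rw [← hρ, hdX, map_one]
    simp [hf, map_sub, h1, hdX]
  set c : K := constantCoeff f with hc
  set u : MvPolynomial (Fin (n + 1)) K := f - C c with hu
  have hdu : d u = 0 := by
    simp [hu, map_sub, hdf]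
  have hcu : constantCoeff u = 0 := by
    simp [hu, hc]
  have hinv : ∀ x ∈ Ideal.span {u}, d x ∈ Ideal.span {u} := by
    intro x hx
    rw [Ideal.mem_span_singleton] at hx ⊢
    obtain ⟨g, rfl⟩ := hx
    refine ⟨d g, ?_⟩
    rw [Derivation.leibniz, hdu]
    simp [mul_comm]
  rcases hsimple _ hinv with h | h
  · have hu0 : u = 0 := by
      have := Ideal.span_singleton_eq_bot.mp h
      exact this
    refine ⟨c, ?_⟩
    have : f = C c := by
      have := sub_eq_zero.mp hu0
      exact this
    rw [hf] at this
    linear_combination this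
  · exfalso
    have hunit : IsUnit u := by
      rwa [Ideal.span_singleton_eq_top] at h
    have : IsUnit (constantCoeff u) := hunit.map constantCoeff
    rw [hcu] at this
    exact this.ne_zero rfl
end

section
/- Let K be a field of characteristic zero and d the derivation of K[X,Y] with d(X)=1 and d(Y) of Y-degree n ≥ 2 (leading coefficient hₙ ∈ K[X] nonzero). If ρ is a K-algebra automorphism commuting with d such that ρ(X)=X and ρ(Y)=b₀+Y with b₀ ∈ K[X], then b₀ = 0, i.e. ρ is the identity. -/
open MvPolynomial

/-- For a derivation of `Y`-degree `n ≥ 2`, an element of the isotropy group with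
`ρ(X) = X` and `ρ(Y) = b₀ + Y` satisfies `b₀ = 0`, i.e. `ρ = id`. -/
theorem stmt7 (K : Type*) [Field K] [CharZero K] (n : ℕ) (hn : 2 ≤ n)
    (h : ℕ → Polynomial K) (hhn : h n ≠ 0)
    (d : Derivation K (MvPolynomial (Fin 2) K) (MvPolynomial (Fin 2) K))
    (hdX : d (X 0) = 1)
    (hdY : d (X 1) = ∑ i ∈ Finset.range (n + 1),
      Polynomial.aeval (X 0 : MvPolynomial (Fin 2) K) (h i) * (X 1) ^ i)
    (ρ : MvPolynomial (Fin 2) K ≃ₐ[K] MvPolynomial (Fin 2) K)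
    (hρ : ∀ r, ρ (d r) = d (ρ r))
    (b₀ : Polynomial K)
    (hρX : ρ (X 0) = X 0)
    (hρY : ρ (X 1) = Polynomial.aeval (X 0 : MvPolynomial (Fin 2) K) b₀ + X 1) :
    b₀ = 0 ∧ ρ = AlgEquiv.refl := by
  have key := hρ (X 1)
  rw [hρY, hdY] at key
  -- compute d of RHS
  have hdb : d (Polynomial.aeval (X 0 : MvPolynomial (Fin 2) K) b₀)
      = Polynomial.aeval (X 0 : MvPolynomial (Fin 2) K) (Polynomial.derivative b₀) := by
    rw [Derivation.map_aeval, hdX, smul_eq_mul, mul_one]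
  rw [map_sum] at key
  simp only [map_mul, map_pow, hρY] at key
  have hcoef : ∀ i, ρ (Polynomial.aeval (X 0 : MvPolynomial (Fin 2) K) (h i))
      = Polynomial.aeval (X 0 : MvPolynomial (Fin 2) K) (h i) := by
    intro i
    rw [← Polynomial.aeval_algHom_apply ρ (X 0) (h i), hρX]
  simp only [hcoef] at key
  rw [map_add, hdb, hdY] at key
  -- now push through φ : MvPolynomial (Fin 2) K →ₐ[K] Polynomial (Polynomial K)
  set φ : MvPolynomial (Fin 2) K →ₐ[K] Polynomial (Polynomial K) :=
    MvPolynomial.aeval ![Polynomial.C Polynomial.X, Polynomial.X] with hφ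
  have hφa : ∀ p : Polynomial K,
      φ (Polynomial.aeval (X 0 : MvPolynomial (Fin 2) K) p) = Polynomial.C p := by
    intro p
    rw [← Polynomial.aeval_algHom_apply φ (X 0) p]
    have : φ (X 0) = Polynomial.CAlgHom (R := K) Polynomial.X := by simp [hφ, Polynomial.CAlgHom]
    rw [this, Polynomial.aeval_algHom_apply, Polynomial.aeval_X_left_apply]
    rfl
  have key2 := congrArg φ key
  rw [map_sum, map_add, map_sum] at key2
  simp only [map_mul, map_pow, map_add, hφa] at key2
  have hφY : φ (X 1) = Polynomial.X := by simp [hφ]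
  rw [hφY] at key2
  -- take coefficient n-1
  have key3 := congrArg (fun q => Polynomial.coeff q (n-1)) key2
  simp only [Polynomial.finset_sum_coeff, Polynomial.coeff_add, Polynomial.coeff_C_mul,
    add_comm (Polynomial.C b₀) Polynomial.X, Polynomial.coeff_X_add_C_pow,
    Polynomial.coeff_X_pow, Polynomial.coeff_C] at key3
  obtain ⟨m, rfl⟩ : ∃ m, n = m + 2 := ⟨n - 2, by omega⟩
  have h1 : m + 2 - 1 = m + 1 := by omega
  rw [h1] at key3
  rw [if_neg (Nat.succ_ne_zero m), zero_add] at key3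
  simp only [mul_ite, mul_one, mul_zero] at key3
  rw [Finset.sum_ite_eq (Finset.range (m + 2 + 1)) (m+1) h,
    if_pos (by simp : m + 1 ∈ Finset.range (m + 2 + 1))] at key3
  rw [Finset.sum_range_succ, Finset.sum_range_succ] at key3
  rw [Finset.sum_eq_zero (fun x hx => by
    rw [Nat.choose_eq_zero_of_lt (by simpa using hx)]; simp)] at key3
  rw [Nat.sub_self, show m + 2 - (m + 1) = 1 from by omega, Nat.choose_self,
    Nat.choose_succ_self_right] at key3
  simp only [pow_zero, pow_one, Nat.cast_one, mul_one, zero_add] at key3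
  have h3 : h (m + 2) * (b₀ * ((m + 2 : ℕ) : Polynomial K)) = 0 := by
    push_cast at key3 ⊢
    linear_combination key3
  have hb : b₀ = 0 := by
    rcases mul_eq_zero.mp h3 with h4 | h4
    · exact absurd h4 hhn
    rcases mul_eq_zero.mp h4 with h5 | h5
    · exact h5
    · exact absurd h5 (Nat.cast_ne_zero.mpr (by omega))
  refine ⟨hb, ?_⟩
  have hρY' : ρ (X 1) = X 1 := by rw [hρY, hb]; simp
  have hAH : (ρ : MvPolynomial (Fin 2) K →ₐ[K] MvPolynomial (Fin 2) K)
      = AlgHom.id K _ := by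
    apply MvPolynomial.algHom_ext
    intro i
    fin_cases i
    · simpa using hρX
    · simpa using hρY'
  refine AlgEquiv.ext fun p => ?_
  have := congrArg (fun f : MvPolynomial (Fin 2) K →ₐ[K] MvPolynomial (Fin 2) K => f p) hAH
  simpa using this
end

section
/- Let K be a field of characteristic zero, n ≥ 2, p ∈ K nonzero, and d the derivation of K[X,Y] given by d(X)=1 and d(Y) = Yⁿ + pX. Then the isotropy group of d is trivial. -/
namespace Stmt13Aux

open Polynomial

noncomputable section
def e2 (K : Type*) [CommSemiring K] :
    MvPolynomial (Fin 2) K ≃ₐ[K] Polynomial (Polynomial K) :=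
  (MvPolynomial.renameEquiv K (Equiv.swap (0 : Fin 2) 1)).trans <|
    (MvPolynomial.finSuccEquiv K 1).trans <|
      Polynomial.mapAlgEquiv <|
        (MvPolynomial.finSuccEquiv K 0).trans <|
          Polynomial.mapAlgEquiv (MvPolynomial.isEmptyAlgEquiv K (Fin 0))

variable {K : Type*} [CommRing K]

@[simp] lemma e2_X0 : e2 K (MvPolynomial.X 0) = Polynomial.C Polynomial.X := by
  rw [e2]
  simp only [AlgEquiv.trans_apply, MvPolynomial.renameEquiv_apply, MvPolynomial.rename_X,
    Equiv.swap_apply_left]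
  rw [show ((1 : Fin 2)) = Fin.succ 0 from rfl, MvPolynomial.finSuccEquiv_X_succ]
  simp only [Polynomial.coe_mapAlgEquiv, Polynomial.map_C, AlgEquiv.trans_apply,
    MvPolynomial.finSuccEquiv_X_zero, Polynomial.map_X]
  congr 1
  rw [RingHom.coe_coe, AlgEquiv.trans_apply, MvPolynomial.finSuccEquiv_X_zero]
  simp

@[simp] lemma e2_X1 : e2 K (MvPolynomial.X 1) = Polynomial.X := by
  rw [e2]
  simp only [AlgEquiv.trans_apply, MvPolynomial.renameEquiv_apply, MvPolynomial.rename_X,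
    Equiv.swap_apply_right, MvPolynomial.finSuccEquiv_X_zero, Polynomial.coe_mapAlgEquiv,
    Polynomial.map_X]

@[simp] lemma e2_C (k : K) : e2 K (MvPolynomial.C k) = Polynomial.C (Polynomial.C k) := by
  have h : (MvPolynomial.C k : MvPolynomial (Fin 2) K) = algebraMap K _ k := rfl
  rw [h, AlgEquiv.commutes]
  rfl

variable {K : Type*} [CommRing K]

def E1 (K : Type*) [CommRing K] :
    Derivation K (Polynomial (Polynomial K)) (Polynomial (Polynomial K)) :=
  PolynomialModule.equivPolynomialSelf.compDer
    (Polynomial.derivative' : Derivation K (Polynomial K) (Polynomial K)).mapCoeffs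

lemma E1_coeff (f : Polynomial (Polynomial K)) (i : ℕ) :
    (E1 K f).coeff i = Polynomial.derivative (f.coeff i) := rfl

lemma E1_C (a : Polynomial K) :
    E1 K (Polynomial.C a) = Polynomial.C (Polynomial.derivative a) := by
  ext i
  rw [E1_coeff]
  simp [Polynomial.coeff_C, apply_ite Polynomial.derivative]

lemma E1_X : E1 K (Polynomial.X) = 0 := by
  ext i
  rw [E1_coeff]
  simp [Polynomial.coeff_X, apply_ite Polynomial.derivative]

lemma E1_natDegree_le (f : Polynomial (Polynomial K)) : (E1 K f).natDegree ≤ f.natDegree := by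
  rw [Polynomial.natDegree_le_iff_coeff_eq_zero]
  intro N hN
  rw [E1_coeff, Polynomial.coeff_eq_zero_of_natDegree_lt hN, Polynomial.derivative_zero]

lemma deriv_facts {A : Type*} [CommRing A] [IsDomain A] [CharZero A] {f : Polynomial A}
    (h : f.natDegree ≠ 0) :
    Polynomial.derivative f ≠ 0 ∧
      (Polynomial.derivative f).natDegree = f.natDegree - 1 := by
  have hf0 : f ≠ 0 := fun h0 => h (by simp [h0])
  have h1 : (Polynomial.derivative f).coeff (f.natDegree - 1) ≠ 0 := by
    rw [Polynomial.coeff_derivative, show f.natDegree - 1 + 1 = f.natDegree by omega]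
    exact mul_ne_zero (Polynomial.leadingCoeff_ne_zero.mpr hf0) (Nat.cast_add_one_ne_zero _)
  refine ⟨fun h0 => h1 (by simp [h0]), le_antisymm (Polynomial.natDegree_derivative_le f)
    (Polynomial.le_natDegree_of_ne_zero h1)⟩

/-- Pull back a derivation along an algebra isomorphism. -/
def pullback {A B : Type*} [CommRing A] [CommRing B] [Algebra K A] [Algebra K B]
    (e : A ≃ₐ[K] B) (D : Derivation K B B) : Derivation K A A where
  toLinearMap := e.symm.toLinearMap.comp (D.toLinearMap.comp e.toLinearMap)
  map_one_eq_zero' := by simp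
  leibniz' a b := by
    simp only [LinearMap.coe_comp, Function.comp_apply, AlgEquiv.toLinearMap_apply, map_mul,
      Derivation.coeFn_coe, Derivation.leibniz, smul_eq_mul, map_add, map_mul,
      AlgEquiv.symm_apply_apply]

lemma pullback_apply {A B : Type*} [CommRing A] [CommRing B] [Algebra K A] [Algebra K B]
    (e : A ≃ₐ[K] B) (D : Derivation K B B) (a : A) :
    pullback e D a = e.symm (D (e a)) := rfl

lemma core {K : Type*} [Field K] [CharZero K] {n : ℕ} (hn : 2 ≤ n) {p : K} (hp : p ≠ 0)
    {F G : Polynomial (Polynomial K)}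
    (h1 : E1 K F + derivative F * (X ^ n + C (C p * X)) = 1)
    (h2 : E1 K G + derivative G * (X ^ n + C (C p * X)) = G ^ n + C (C p) * F) :
    F = C X ∧ G = X := by
  set w : Polynomial (Polynomial K) := X ^ n + C (C p * X) with hw
  have hwdeg : w.natDegree = n := natDegree_X_pow_add_C
  have hw0 : w ≠ 0 := (monic_X_pow_add_C _ (by omega : n ≠ 0)).ne_zero
  -- Step A : F = C a with a = X + C c
  have hFdeg : F.natDegree = 0 := by
    by_contra hm
    obtain ⟨hd0, hddeg⟩ := deriv_facts hm
    have hprod : (derivative F * w).natDegree = F.natDegree - 1 + n := by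
      rw [natDegree_mul hd0 hw0, hddeg, hwdeg]
    have hlt : (E1 K F).natDegree < (derivative F * w).natDegree := by
      rw [hprod]
      have := E1_natDegree_le F
      omega
    have hsum : (E1 K F + derivative F * w).natDegree = F.natDegree - 1 + n := by
      rw [natDegree_add_eq_right_of_natDegree_lt hlt, hprod]
    rw [h1, natDegree_one] at hsum
    omega
  obtain ⟨a, rfl⟩ : ∃ a, F = C a := ⟨F.coeff 0, eq_C_of_natDegree_eq_zero hFdeg⟩
  rw [E1_C, derivative_C, zero_mul, add_zero, ← C_1] at h1
  have ha' : derivative a = 1 := C_injective h1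
  obtain ⟨c, hc⟩ : ∃ c, a = X + C c := by
    have hd : derivative (a - X) = 0 := by
      rw [derivative_sub, ha', derivative_X, sub_self]
    have h0 : a - X = C ((a - X).coeff 0) :=
      eq_C_of_natDegree_eq_zero (natDegree_eq_zero_of_derivative_eq_zero hd)
    exact ⟨(a - X).coeff 0, by rw [← h0]; ring⟩
  -- Step B : natDegree G = 1
  have hGdeg : G.natDegree = 1 := by
    rcases Nat.lt_or_ge G.natDegree 1 with hlt1 | hge1
    · exfalso
      obtain ⟨b, rfl⟩ : ∃ b, G = C b := ⟨G.coeff 0, eq_C_of_natDegree_eq_zero (by omega)⟩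
      rw [E1_C, derivative_C, zero_mul, add_zero, ← C_pow, ← C_mul, ← C_add] at h2
      have hb : derivative b = b ^ n + C p * a := C_injective h2
      have hdeg1 : (C p * a).natDegree = 1 := by
        rw [natDegree_C_mul hp, hc, natDegree_X_add_C]
      rcases eq_or_ne b.natDegree 0 with hb0 | hb0
      · obtain ⟨β, rfl⟩ : ∃ β, b = C β := ⟨b.coeff 0, eq_C_of_natDegree_eq_zero hb0⟩
        rw [derivative_C] at hb
        have h3 : (C β) ^ n = -(C p * a) := eq_neg_of_add_eq_zero_left hb.symm
        have h4 : ((C β : Polynomial K) ^ n).natDegree = 0 := by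
          rw [← C_pow, natDegree_C]
        rw [h3, natDegree_neg, hdeg1] at h4
        exact one_ne_zero h4
      · have hsmall : (C p * a).natDegree < (b ^ n).natDegree := by
          rw [hdeg1, natDegree_pow]
          have : 2 * 1 ≤ n * b.natDegree := Nat.mul_le_mul hn (by omega)
          omega
        have h4 : (b ^ n + C p * a).natDegree = n * b.natDegree := by
          rw [natDegree_add_eq_left_of_natDegree_lt hsmall, natDegree_pow]
        rw [← hb] at h4
        have h5 : (derivative b).natDegree ≤ b.natDegree - 1 := natDegree_derivative_le b
        have h6 : 2 * b.natDegree ≤ n * b.natDegree := Nat.mul_le_mul_right _ hn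
        omega
    · by_contra hne
      have h6 : 2 ≤ G.natDegree := by omega
      obtain ⟨hd0, hddeg⟩ := deriv_facts (by omega : G.natDegree ≠ 0)
      have hsmall : (C (C p) * C a).natDegree < (G ^ n).natDegree := by
        rw [← C_mul, natDegree_C, natDegree_pow]
        exact Nat.mul_pos (by omega) (by omega)
      have hrhs : (G ^ n + C (C p) * C a).natDegree = n * G.natDegree := by
        rw [natDegree_add_eq_left_of_natDegree_lt hsmall, natDegree_pow]
      have hprod : (derivative G * w).natDegree = G.natDegree - 1 + n := by
        rw [natDegree_mul hd0 hw0, hddeg, hwdeg]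
      have hlt : (E1 K G).natDegree < (derivative G * w).natDegree := by
        rw [hprod]
        have := E1_natDegree_le G
        omega
      have hsum : (E1 K G + derivative G * w).natDegree = G.natDegree - 1 + n := by
        rw [natDegree_add_eq_right_of_natDegree_lt hlt, hprod]
      rw [h2, hrhs] at hsum
      have ht : 2 * (G.natDegree - 1) ≤ n * (G.natDegree - 1) := Nat.mul_le_mul_right _ hn
      have e1 : n * (G.natDegree - 1) + n = n * G.natDegree := by
        have h7 : G.natDegree - 1 + 1 = G.natDegree := by omega
        calc n * (G.natDegree - 1) + n = n * (G.natDegree - 1 + 1) := by ring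
          _ = n * G.natDegree := by rw [h7]
      omega
  -- G = C b1 * X + C b0
  have hG0 : G ≠ 0 := fun h0 => by simp [h0] at hGdeg
  have hb1 : G.coeff 1 ≠ 0 := by
    have := Polynomial.coeff_natDegree (p := G)
    rw [hGdeg] at this
    rw [this]
    exact leadingCoeff_ne_zero.mpr hG0
  have hGform : G = C (G.coeff 1) * X + C (G.coeff 0) :=
    eq_X_add_C_of_natDegree_le_one (by omega)
  have hdG : derivative G = C (G.coeff 1) := by
    conv_lhs => rw [hGform]
    simp
  -- coefficient comparison at each index
  rw [← C_mul] at h2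
  have hcoef : ∀ i, derivative (G.coeff i) + G.coeff 1 * w.coeff i
      = (G ^ n).coeff i + (C (C p * a)).coeff i := by
    intro i
    have h := congrArg (fun q => Polynomial.coeff q i) h2
    simp only [coeff_add, hdG, coeff_C_mul, E1_coeff] at h
    exact h
  -- index n : leading coefficient
  have hwcn : w.coeff n = 1 := by
    rw [hw, coeff_add, coeff_X_pow, if_pos rfl, coeff_C, if_neg (by omega : n ≠ 0), add_zero]
  have hb1n : G.coeff 1 = G.coeff 1 ^ n := by
    have h := hcoef n
    rw [hwcn, mul_one, coeff_eq_zero_of_natDegree_lt (by omega), derivative_zero, zero_add,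
      coeff_C, if_neg (by omega : n ≠ 0), add_zero] at h
    have hpow : (G ^ n).coeff n = G.coeff 1 ^ n := by
      have hdp : (G ^ n).natDegree = n := by rw [natDegree_pow, hGdeg, mul_one]
      have := Polynomial.coeff_natDegree (p := G ^ n)
      rw [hdp, leadingCoeff_pow] at this
      rw [this, leadingCoeff, hGdeg]
    rw [hpow] at h
    exact h
  obtain ⟨c1, hc1⟩ : ∃ c1, G.coeff 1 = C c1 := by
    refine ⟨(G.coeff 1).coeff 0, eq_C_of_natDegree_eq_zero ?_⟩
    have hdeq := congrArg natDegree hb1n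
    rw [natDegree_pow] at hdeq
    have h2k : 2 * (G.coeff 1).natDegree ≤ n * (G.coeff 1).natDegree :=
      Nat.mul_le_mul_right _ hn
    omega
  have hc10 : c1 ≠ 0 := fun h0 => hb1 (by rw [hc1, h0, map_zero])
  -- index n-1 : b0 = 0
  have hb0 : G.coeff 0 = 0 := by
    set r : Polynomial K := C c1⁻¹ * G.coeff 0 with hr
    have hb0r : G.coeff 0 = C c1 * r := by
      rw [hr, ← mul_assoc, ← C_mul, mul_inv_cancel₀ hc10, C_1, one_mul]
    have hGform2 : G = C (C c1) * (X + C r) := by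
      rw [mul_add, ← C_mul, ← hb0r, ← hc1]
      exact hGform
    have hGn : G ^ n = C ((C c1) ^ n) * (X + C r) ^ n := by
      rw [hGform2, mul_pow, C_pow]
    have h := hcoef (n - 1)
    have hder : derivative (G.coeff (n - 1)) = 0 := by
      rcases eq_or_ne n 2 with h2' | h2'
      · rw [h2', show (2:ℕ) - 1 = 1 from rfl, hc1, derivative_C]
      · rw [coeff_eq_zero_of_natDegree_lt (by omega), derivative_zero]
    have hwc : w.coeff (n - 1) = 0 := by
      rw [hw, coeff_add, coeff_X_pow, if_neg (by omega : ¬ n - 1 = n), coeff_C,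
        if_neg (by omega : n - 1 ≠ 0), add_zero]
    rw [hder, hwc, mul_zero, add_zero, coeff_C, if_neg (by omega : n - 1 ≠ 0), add_zero,
      hGn, coeff_C_mul, coeff_X_add_C_pow, show n - (n - 1) = 1 by omega, pow_one,
      Nat.choose_symm (by omega : 1 ≤ n), Nat.choose_one_right] at h
    have hr0 : r = 0 := by
      have hmul := h.symm
      simp only [mul_eq_zero, pow_eq_zero_iff (show n ≠ 0 by omega), C_eq_zero,
        Nat.cast_eq_zero] at hmul
      rcases hmul with h' | h' | h'
      · exact absurd h' hc10
      · exact h'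
      · omega
    rw [hb0r, hr0, mul_zero]
  -- index 0 : c1 = 1 and c = 0
  have h0 := hcoef 0
  have hds : derivative (G.coeff 0) = 0 := by rw [hb0, derivative_zero]
  have hGX : G = C (C c1) * X := by
    rw [hGform, hb0, map_zero, add_zero, hc1]
  have hGn0 : (G ^ n).coeff 0 = 0 := by
    rw [hGX, mul_pow, ← C_pow, coeff_C_mul, coeff_X_pow, if_neg (by omega : ¬ (0:ℕ) = n),
      mul_zero]
  have hwc0 : w.coeff 0 = C p * X := by
    rw [hw, coeff_add, coeff_X_pow, if_neg (by omega : ¬ (0:ℕ) = n), coeff_C, if_pos rfl,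
      zero_add]
  rw [hds, hwc0, zero_add, hGn0, zero_add, coeff_C, if_pos rfl, hc1, hc] at h0
  -- h0 : C c1 * (C p * X) = C p * (X + C c)
  have hc1eq : c1 * p = p := by
    have := congrArg (fun q => Polynomial.coeff q 1) h0
    simpa [coeff_C_mul, mul_add] using this
  have hceq : p * c = 0 := by
    have := congrArg (fun q => Polynomial.coeff q 0) h0
    simpa [coeff_C_mul, mul_add, coeff_C] using this
  have hc1_1 : c1 = 1 := mul_right_cancel₀ hp (by rw [one_mul]; exact hc1eq)
  have hc0 : c = 0 := by
    rcases mul_eq_zero.mp hceq with h' | h'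
    · exact absurd h' hp
    · exact h'
  constructor
  · rw [hc, hc0, map_zero, add_zero]
  · rw [hGX, hc1_1]
    simp

end

end Stmt13Aux

open MvPolynomial

/-- The isotropy group of the (simple) derivation `d(X) = 1`, `d(Y) = Yⁿ + pX`,
`n ≥ 2`, `p ≠ 0`, is trivial. -/
theorem stmt13 (K : Type*) [Field K] [CharZero K] (n : ℕ) (hn : 2 ≤ n)
    (p : K) (hp : p ≠ 0)
    (d : Derivation K (MvPolynomial (Fin 2) K) (MvPolynomial (Fin 2) K))
    (hdX : d (X 0) = 1)
    (hdY : d (X 1) = (X 1) ^ n + C p * X 0)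
    (ρ : MvPolynomial (Fin 2) K ≃ₐ[K] MvPolynomial (Fin 2) K)
    (hρ : ∀ r, ρ (d r) = d (ρ r)) :
    ρ = AlgEquiv.refl := by
  classical
  set w : Polynomial (Polynomial K) :=
    Polynomial.X ^ n + Polynomial.C (Polynomial.C p * Polynomial.X) with hw
  set DE : Derivation K (Polynomial (Polynomial K)) (Polynomial (Polynomial K)) :=
    Stmt13Aux.E1 K + (Polynomial.mkDerivation (Polynomial K) w).restrictScalars K with hDE
  have hDEapp : ∀ h : Polynomial (Polynomial K),
      DE h = Stmt13Aux.E1 K h + Polynomial.derivative h * w := by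
    intro h
    rw [hDE, Derivation.add_apply, Derivation.restrictScalars_apply,
      Polynomial.mkDerivation_apply, smul_eq_mul]
  have hd : d = Stmt13Aux.pullback (Stmt13Aux.e2 K) DE := by
    apply MvPolynomial.derivation_ext
    intro i
    fin_cases i
    · show d (X 0) = Stmt13Aux.pullback (Stmt13Aux.e2 K) DE (X 0)
      rw [hdX, Stmt13Aux.pullback_apply, Stmt13Aux.e2_X0]
      have hC : DE (Polynomial.C Polynomial.X) = 1 := by
        rw [hDEapp, Stmt13Aux.E1_C, Polynomial.derivative_X, Polynomial.derivative_C,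
          zero_mul, add_zero, Polynomial.C_1]
      rw [hC, map_one]
    · show d (X 1) = Stmt13Aux.pullback (Stmt13Aux.e2 K) DE (X 1)
      rw [hdY, Stmt13Aux.pullback_apply, Stmt13Aux.e2_X1]
      have hX : DE Polynomial.X = w := by
        rw [hDEapp, Stmt13Aux.E1_X, Polynomial.derivative_X, one_mul, zero_add]
      rw [hX, AlgEquiv.eq_symm_apply, map_add, map_pow, map_mul, Stmt13Aux.e2_X1,
        Stmt13Aux.e2_X0, Stmt13Aux.e2_C, hw, ← Polynomial.C_mul]
  have key : ∀ q, Stmt13Aux.e2 K (d q) = DE (Stmt13Aux.e2 K q) := fun q => by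
    rw [hd, Stmt13Aux.pullback_apply, AlgEquiv.apply_symm_apply]
  have hCp : ρ (C p) = C p := by
    have h1 : (C p : MvPolynomial (Fin 2) K) = algebraMap K _ p := rfl
    rw [h1, AlgEquiv.commutes]
  have hF1 : d (ρ (X 0)) = 1 := by rw [← hρ, hdX, map_one]
  have hG1 : d (ρ (X 1)) = (ρ (X 1)) ^ n + C p * (ρ (X 0)) := by
    rw [← hρ, hdY, map_add, map_pow, map_mul, hCp]
  have h1' : Stmt13Aux.E1 K (Stmt13Aux.e2 K (ρ (X 0))) +
      Polynomial.derivative (Stmt13Aux.e2 K (ρ (X 0))) * w = 1 := by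
    have h := key (ρ (X 0))
    rw [hF1, map_one, hDEapp] at h
    exact h.symm
  have h2' : Stmt13Aux.E1 K (Stmt13Aux.e2 K (ρ (X 1))) +
      Polynomial.derivative (Stmt13Aux.e2 K (ρ (X 1))) * w
      = (Stmt13Aux.e2 K (ρ (X 1))) ^ n +
        Polynomial.C (Polynomial.C p) * (Stmt13Aux.e2 K (ρ (X 0))) := by
    have h := key (ρ (X 1))
    rw [hG1, map_add, map_pow, map_mul, Stmt13Aux.e2_C, hDEapp] at h
    exact h.symm
  rw [hw] at h1' h2'
  obtain ⟨hF, hG⟩ := Stmt13Aux.core hn hp h1' h2'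
  have hX0 : ρ (X 0) = X 0 := (Stmt13Aux.e2 K).injective (by rw [hF, Stmt13Aux.e2_X0])
  have hX1 : ρ (X 1) = X 1 := (Stmt13Aux.e2 K).injective (by rw [hG, Stmt13Aux.e2_X1])
  have hAH : (ρ : MvPolynomial (Fin 2) K →ₐ[K] MvPolynomial (Fin 2) K)
      = AlgHom.id K (MvPolynomial (Fin 2) K) := by
    apply MvPolynomial.algHom_ext
    intro i
    fin_cases i
    · simpa using hX0
    · simpa using hX1
  exact AlgEquiv.ext fun q => by simpa using AlgHom.congr_fun hAH q
end

section
/- Let K be a field of characteristic zero and d the derivation of K[X,Y,Z] with d(X)=1, d(Y)=1+XY, d(Z)=1+XZ. For any a,b,c,e ∈ K with a+b=1, c+e=1, and ae−bc ≠ 0, the K-algebra endomorphism ρ of K[X,Y,Z] defined by ρ(X)=X, ρ(Y)=aY+bZ, ρ(Z)=cY+eZ is an automorphism satisfying ρdρ⁻¹ = d. In particular, the isotropy group of d is infinite when K is infinite. -/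
open MvPolynomial

theorem key15 (K : Type*) [Field K] [CharZero K]
    (d : Derivation K (MvPolynomial (Fin 3) K) (MvPolynomial (Fin 3) K))
    (hdX : d (X 0) = 1)
    (hdY : d (X 1) = 1 + X 0 * X 1)
    (hdZ : d (X 2) = 1 + X 0 * X 2)
    (a b c e : K) (hab : a + b = 1) (hce : c + e = 1) (hdet : a * e - b * c ≠ 0) :
    ∃ ρ : MvPolynomial (Fin 3) K ≃ₐ[K] MvPolynomial (Fin 3) K,
      ρ (X 0) = X 0 ∧ ρ (X 1) = C a * X 1 + C b * X 2 ∧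
        ρ (X 2) = C c * X 1 + C e * X 2 ∧ ∀ r, ρ (d r) = d (ρ r) := by
  set Δ := a * e - b * c with hΔ
  set f : Fin 3 → MvPolynomial (Fin 3) K :=
    ![X 0, C a * X 1 + C b * X 2, C c * X 1 + C e * X 2] with hf
  set g : Fin 3 → MvPolynomial (Fin 3) K :=
    ![X 0, C (e/Δ) * X 1 + C (-(b/Δ)) * X 2, C (-(c/Δ)) * X 1 + C (a/Δ) * X 2] with hg
  have k1 : e/Δ * a + (-(b/Δ)) * c = 1 := by field_simp [hΔ]; ring
  have k2 : e/Δ * b + (-(b/Δ)) * e = 0 := by ring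
  have k3 : (-(c/Δ)) * a + a/Δ * c = 0 := by ring
  have k4 : (-(c/Δ)) * b + a/Δ * e = 1 := by field_simp [hΔ]; ring
  have k1' : a * (e/Δ) + b * (-(c/Δ)) = 1 := by field_simp [hΔ]; ring
  have k2' : a * (-(b/Δ)) + b * (a/Δ) = 0 := by ring
  have k3' : c * (e/Δ) + e * (-(c/Δ)) = 0 := by ring
  have k4' : c * (-(b/Δ)) + e * (a/Δ) = 1 := by field_simp [hΔ]; ring
  have hf0 : f 0 = X 0 := rfl
  have hf1 : f 1 = C a * X 1 + C b * X 2 := rfl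
  have hf2 : f 2 = C c * X 1 + C e * X 2 := rfl
  have hg0 : g 0 = X 0 := rfl
  have hg1 : g 1 = C (e/Δ) * X 1 + C (-(b/Δ)) * X 2 := rfl
  have hg2 : g 2 = C (-(c/Δ)) * X 1 + C (a/Δ) * X 2 := rfl
  have hfg : (aeval f).comp (aeval g) = AlgHom.id K (MvPolynomial (Fin 3) K) := by
    have A0 : ((aeval f).comp (aeval g)) (X 0) = (AlgHom.id K (MvPolynomial (Fin 3) K)) (X 0) := by
      rw [AlgHom.comp_apply, AlgHom.id_apply, aeval_X, hg0, aeval_X, hf0]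
    have A1 : ((aeval f).comp (aeval g)) (X 1) = (AlgHom.id K (MvPolynomial (Fin 3) K)) (X 1) := by
      rw [AlgHom.comp_apply, AlgHom.id_apply, aeval_X, hg1]
      simp only [map_add, map_mul, aeval_C, aeval_X, hf1, hf2, algebraMap_eq]
      linear_combination (norm := (simp only [C_add, C_mul, C_neg, C_1, C_0]; ring1))
        (X 1 : MvPolynomial (Fin 3) K) * congrArg C k1 + (X 2 : MvPolynomial (Fin 3) K) * congrArg C k2
    have A2 : ((aeval f).comp (aeval g)) (X 2) = (AlgHom.id K (MvPolynomial (Fin 3) K)) (X 2) := by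
      rw [AlgHom.comp_apply, AlgHom.id_apply, aeval_X, hg2]
      simp only [map_add, map_mul, aeval_C, aeval_X, hf1, hf2, algebraMap_eq]
      linear_combination (norm := (simp only [C_add, C_mul, C_neg, C_1, C_0]; ring1))
        (X 1 : MvPolynomial (Fin 3) K) * congrArg C k3 + (X 2 : MvPolynomial (Fin 3) K) * congrArg C k4
    apply MvPolynomial.algHom_ext
    intro i
    fin_cases i
    · exact A0
    · exact A1
    · exact A2
  have hgf : (aeval g).comp (aeval f) = AlgHom.id K (MvPolynomial (Fin 3) K) := by
    have A0 : ((aeval g).comp (aeval f)) (X 0) = (AlgHom.id K (MvPolynomial (Fin 3) K)) (X 0) := by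
      rw [AlgHom.comp_apply, AlgHom.id_apply, aeval_X, hf0, aeval_X, hg0]
    have A1 : ((aeval g).comp (aeval f)) (X 1) = (AlgHom.id K (MvPolynomial (Fin 3) K)) (X 1) := by
      rw [AlgHom.comp_apply, AlgHom.id_apply, aeval_X, hf1]
      simp only [map_add, map_mul, aeval_C, aeval_X, hg1, hg2, algebraMap_eq]
      linear_combination (norm := (simp only [C_add, C_mul, C_neg, C_1, C_0]; ring1))
        (X 1 : MvPolynomial (Fin 3) K) * congrArg C k1' + (X 2 : MvPolynomial (Fin 3) K) * congrArg C k2'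
    have A2 : ((aeval g).comp (aeval f)) (X 2) = (AlgHom.id K (MvPolynomial (Fin 3) K)) (X 2) := by
      rw [AlgHom.comp_apply, AlgHom.id_apply, aeval_X, hf2]
      simp only [map_add, map_mul, aeval_C, aeval_X, hg1, hg2, algebraMap_eq]
      linear_combination (norm := (simp only [C_add, C_mul, C_neg, C_1, C_0]; ring1))
        (X 1 : MvPolynomial (Fin 3) K) * congrArg C k3' + (X 2 : MvPolynomial (Fin 3) K) * congrArg C k4'
    apply MvPolynomial.algHom_ext
    intro i
    fin_cases i
    · exact A0
    · exact A1
    · exact A2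
  refine ⟨AlgEquiv.ofAlgHom (aeval f) (aeval g) hfg hgf, ?_, ?_, ?_, ?_⟩
  · show (aeval f) (X 0) = X 0
    rw [aeval_X, hf0]
  · show (aeval f) (X 1) = _
    rw [aeval_X, hf1]
  · show (aeval f) (X 2) = _
    rw [aeval_X, hf2]
  · set ρ : MvPolynomial (Fin 3) K ≃ₐ[K] MvPolynomial (Fin 3) K :=
      AlgEquiv.ofAlgHom (aeval f) (aeval g) hfg hgf with hρ
    have hρ0 : ρ (X 0) = X 0 := by show (aeval f) (X 0) = X 0; rw [aeval_X, hf0]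
    have hρ1 : ρ (X 1) = C a * X 1 + C b * X 2 := by show (aeval f) (X 1) = _; rw [aeval_X, hf1]
    have hρ2 : ρ (X 2) = C c * X 1 + C e * X 2 := by show (aeval f) (X 2) = _; rw [aeval_X, hf2]
    have hs0 : ρ.symm (X 0) = X 0 := ρ.symm_apply_eq.mpr hρ0.symm
    have hs1 : ρ.symm (C a * X 1 + C b * X 2) = X 1 := ρ.symm_apply_eq.mpr hρ1.symm
    have hs2 : ρ.symm (C c * X 1 + C e * X 2) = X 2 := ρ.symm_apply_eq.mpr hρ2.symm
    set D : Derivation K (MvPolynomial (Fin 3) K) (MvPolynomial (Fin 3) K) :=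
      { toLinearMap := ρ.symm.toLinearMap ∘ₗ (d : MvPolynomial (Fin 3) K →ₗ[K] _) ∘ₗ ρ.toLinearMap
        map_one_eq_zero' := by simp
        leibniz' := fun p q => by
          simp only [LinearMap.coe_comp, Function.comp_apply, AlgEquiv.toLinearMap_apply,
            Derivation.coeFn_coe, map_mul, Derivation.leibniz, smul_eq_mul, map_add,
            AlgEquiv.symm_apply_apply] } with hD
    have hDapp : ∀ r, D r = ρ.symm (d (ρ r)) := fun r => rfl
    have hDd : D = d := by
      apply MvPolynomial.derivation_ext
      intro i
      fin_cases i
      · show D (X 0) = d (X 0)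
        rw [hDapp, hρ0, hdX, map_one]
      · show D (X 1) = d (X 1)
        rw [hDapp, hρ1, hdY]
        have key : d (C a * X 1 + C b * X 2) = C (a + b) + X 0 * (C a * X 1 + C b * X 2) := by
          have ha : d (C a) = 0 := by simpa [algebraMap_eq] using d.map_algebraMap a
          have hb : d (C b) = 0 := by simpa [algebraMap_eq] using d.map_algebraMap b
          rw [map_add, d.leibniz, d.leibniz, ha, hb, hdY, hdZ]
          simp only [smul_eq_mul, smul_zero]
          rw [C_add]
          ring
        rw [key, hab, C_1, map_add, map_mul, map_one, hs0, hs1]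
      · show D (X 2) = d (X 2)
        rw [hDapp, hρ2, hdZ]
        have key : d (C c * X 1 + C e * X 2) = C (c + e) + X 0 * (C c * X 1 + C e * X 2) := by
          have hc : d (C c) = 0 := by simpa [algebraMap_eq] using d.map_algebraMap c
          have he : d (C e) = 0 := by simpa [algebraMap_eq] using d.map_algebraMap e
          rw [map_add, d.leibniz, d.leibniz, hc, he, hdY, hdZ]
          simp only [smul_eq_mul, smul_zero]
          rw [C_add]
          ring
        rw [key, hce, C_1, map_add, map_mul, map_one, hs0, hs2]
    intro r
    have h2 : ρ.symm (d (ρ r)) = d r := by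
      rw [← hDapp r, hDd]
    rw [← h2, AlgEquiv.apply_symm_apply]

/-- For the derivation of `K[X,Y,Z]` with `d(X)=1`, `d(Y)=1+XY`, `d(Z)=1+XZ`, every
matrix `(a b; c e)` with `a+b=1`, `c+e=1`, `ae-bc ≠ 0` yields an automorphism in the
isotropy group; in particular the isotropy group is infinite when `K` is infinite. -/
theorem stmt15 (K : Type*) [Field K] [CharZero K]
    (d : Derivation K (MvPolynomial (Fin 3) K) (MvPolynomial (Fin 3) K))
    (hdX : d (X 0) = 1)
    (hdY : d (X 1) = 1 + X 0 * X 1)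
    (hdZ : d (X 2) = 1 + X 0 * X 2)
    (a b c e : K) (hab : a + b = 1) (hce : c + e = 1) (hdet : a * e - b * c ≠ 0) :
    (∃ ρ : MvPolynomial (Fin 3) K ≃ₐ[K] MvPolynomial (Fin 3) K,
      ρ (X 0) = X 0 ∧ ρ (X 1) = C a * X 1 + C b * X 2 ∧
        ρ (X 2) = C c * X 1 + C e * X 2 ∧ ∀ r, ρ (d r) = d (ρ r)) ∧
      (Infinite K →
        {σ : MvPolynomial (Fin 3) K ≃ₐ[K] MvPolynomial (Fin 3) K |
            ∀ r, σ (d r) = d (σ r)}.Infinite) := by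
  refine ⟨key15 K d hdX hdY hdZ a b c e hab hce hdet, fun hK => ?_⟩
  have hmem : ∀ t : K,
      ∃ ρ : MvPolynomial (Fin 3) K ≃ₐ[K] MvPolynomial (Fin 3) K,
        ρ (X 0) = X 0 ∧ ρ (X 1) = C t * X 1 + C (1 - t) * X 2 ∧
          ρ (X 2) = C (t - 1) * X 1 + C (2 - t) * X 2 ∧ ∀ r, ρ (d r) = d (ρ r) := by
    intro t
    refine key15 K d hdX hdY hdZ t (1 - t) (t - 1) (2 - t) (by ring) (by ring) ?_
    have : t * (2 - t) - (1 - t) * (t - 1) = 1 := by ring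
    rw [this]; exact one_ne_zero
  set F : K → (MvPolynomial (Fin 3) K ≃ₐ[K] MvPolynomial (Fin 3) K) :=
    fun t => (hmem t).choose with hF
  have hF1 : ∀ t, F t (X 1) = C t * X 1 + C (1 - t) * X 2 := fun t => (hmem t).choose_spec.2.1
  have hFd : ∀ t, ∀ r, F t (d r) = d (F t r) := fun t => (hmem t).choose_spec.2.2.2
  apply Set.infinite_of_injective_forall_mem (f := F)
  · intro s t hst
    have h1 : F s (X 1) = F t (X 1) := by rw [hst]
    rw [hF1, hF1] at h1
    have h2 := congrArg (coeff (Finsupp.single (1 : Fin 3) 1)) h1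
    classical
    have h4 : ∀ u : K, coeff (Finsupp.single (1 : Fin 3) 1) (C u * X 1 + C (1 - u) * X 2) = u := by
      intro u
      simp [coeff_add, coeff_C_mul, coeff_X', Finsupp.single_eq_single_iff, sub_mul, coeff_sub]
    exact (h4 s).symm.trans (h2.trans (h4 t))
  · intro t
    exact hFd t
end

section
/- Let K be a field of characteristic zero and d a simple derivation of K[X,Y] with d(X)=1 and d(Y)=aY+b, a,b ∈ K[X]. Then a ≠ 0, and moreover for any c ∈ K[X] and m ∈ K with d(c) = m·a·c (i.e. c' = (m·a)·c treating c ∈ K[X]), if m ≠ 0 then c ∈ K. -/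
open MvPolynomial

theorem poly_antideriv {K : Type*} [Field K] [CharZero K] (p : Polynomial K) :
    ∃ B : Polynomial K, Polynomial.derivative B = p := by
  refine ⟨p.sum fun n x => Polynomial.C (x / (n + 1)) * Polynomial.X ^ (n + 1), ?_⟩
  rw [Polynomial.sum, map_sum]
  conv_rhs => rw [← p.sum_C_mul_X_pow_eq]
  rw [Polynomial.sum]
  refine Finset.sum_congr rfl fun n _ => ?_
  rw [Polynomial.derivative_C_mul, Polynomial.derivative_X_pow]
  push_cast
  rw [← mul_assoc, ← Polynomial.C_mul, div_mul_cancel₀]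
  exact Nat.cast_add_one_ne_zero n


/-- If `d` is a simple Shamsuddin derivation of `K[X,Y]` with `d(X)=1`, `d(Y)=aY+b`,
then `a ≠ 0`, and any `c ∈ K[X]` with `c' = (m·a)·c` for some `m ≠ 0` is a constant. -/
theorem stmt19 (K : Type*) [Field K] [CharZero K]
    (a b : Polynomial K)
    (d : Derivation K (MvPolynomial (Fin 2) K) (MvPolynomial (Fin 2) K))
    (hdX : d (X 0) = 1)
    (hdY : d (X 1) =
      Polynomial.aeval (X 0 : MvPolynomial (Fin 2) K) a * X 1 +
        Polynomial.aeval (X 0 : MvPolynomial (Fin 2) K) b)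
    (hsimple : ∀ I : Ideal (MvPolynomial (Fin 2) K), (∀ x ∈ I, d x ∈ I) → I = ⊥ ∨ I = ⊤) :
    a ≠ 0 ∧
      ∀ (c : Polynomial K) (m : K),
        Polynomial.derivative c = Polynomial.C m * a * c → m ≠ 0 →
          ∃ k : K, c = Polynomial.C k := by
  constructor
  · -- a ≠ 0
    intro ha
    obtain ⟨B, hB⟩ := poly_antideriv (K := K) b
    set g : MvPolynomial (Fin 2) K :=
      X 1 - Polynomial.aeval (X 0 : MvPolynomial (Fin 2) K) B with hg
    have hdg : d g = 0 := by
      rw [hg, map_sub, hdY, Derivation.map_aeval, hB, hdX, ha, map_zero, smul_eq_mul, mul_one]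
      ring
    have hinv : ∀ x ∈ Ideal.span {g}, d x ∈ Ideal.span {g} := by
      intro x hx
      rw [Ideal.mem_span_singleton'] at hx
      obtain ⟨f, rfl⟩ := hx
      rw [Derivation.leibniz, hdg, smul_zero, zero_add, smul_eq_mul]
      exact Ideal.mul_mem_right _ _ (Ideal.mem_span_singleton_self g)
    -- evaluate at X0 ↦ 0, X1 ↦ X
    set ψ : MvPolynomial (Fin 2) K →ₐ[K] Polynomial K :=
      aeval (fun i => if i = 0 then 0 else Polynomial.X) with hψ
    have hψg : ψ g = Polynomial.X - Polynomial.C (B.coeff 0) := by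
      rw [hg, map_sub, hψ]
      rw [← Polynomial.aeval_algHom_apply]
      simp only [aeval_X]
      norm_num
      rw [← Polynomial.coeff_zero_eq_aeval_zero', Polynomial.algebraMap_eq]
    rcases hsimple _ hinv with h | h
    · rw [Ideal.span_singleton_eq_bot] at h
      have := hψg
      rw [h, map_zero] at this
      exact Polynomial.X_sub_C_ne_zero (B.coeff 0) this.symm
    · rw [Ideal.span_singleton_eq_top] at h
      have : IsUnit (ψ g) := h.map ψ
      rw [hψg] at this
      exact Polynomial.not_isUnit_X_sub_C _ this
  · intro c m hc hm
    set g : MvPolynomial (Fin 2) K :=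
      Polynomial.aeval (X 0 : MvPolynomial (Fin 2) K) c with hg
    have hdg : d g = Polynomial.aeval (X 0 : MvPolynomial (Fin 2) K) (Polynomial.C m * a) * g := by
      rw [hg, Derivation.map_aeval, hc, hdX, smul_eq_mul, mul_one, map_mul]
    have hinv : ∀ x ∈ Ideal.span {g}, d x ∈ Ideal.span {g} := by
      intro x hx
      rw [Ideal.mem_span_singleton'] at hx
      obtain ⟨f, rfl⟩ := hx
      rw [Derivation.leibniz, hdg, smul_eq_mul, smul_eq_mul]
      refine Ideal.add_mem _ ?_ ?_
      · rw [← mul_assoc]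
        exact Ideal.mul_mem_left _ _ (Ideal.mem_span_singleton_self g)
      · exact Ideal.mul_mem_right _ _ (Ideal.mem_span_singleton_self g)
    set φ : MvPolynomial (Fin 2) K →ₐ[K] Polynomial K :=
      aeval (fun i => if i = 0 then Polynomial.X else 0) with hφ
    have hφg : φ g = c := by
      rw [hg, hφ, ← Polynomial.aeval_algHom_apply]
      simp
    rcases hsimple _ hinv with h | h
    · rw [Ideal.span_singleton_eq_bot] at h
      refine ⟨0, ?_⟩
      rw [map_zero, ← hφg, h, map_zero]
    · rw [Ideal.span_singleton_eq_top] at h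
      have : IsUnit c := hφg ▸ h.map φ
      obtain ⟨r, -, hr⟩ := Polynomial.isUnit_iff.mp this
      exact ⟨r, hr.symm⟩
end
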